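/- There exists a non-negative integer-valued random variable Z whose characteristic function is φ(t) = exp(∫ (e^{itx} − 1) dν(x)) with ν = 2δ₁ + 2δ₂ − δ₃ + 2δ₄ + 2δ₅, and Z is not infinitely divisible; yet if X is an independent compound Poisson random variable with Lévy measure δ₃, then X + Z is compound Poisson with Lévy measure 2δ₁ + 2δ₂ + 2δ₄ + 2δ₅. Hence the convolution of a non-infinitely-divisible distribution with an infinitely divisible one can be infinitely divisible. -/

import Mathlib

open MeasureTheory Complex ENNReal

/-- Convolution of measures on `ℝ`: pushforward of the product under addition. -/
noncomputable def mconv (μ ν : Measure ℝ) : Measure ℝ :=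
  (μ.prod ν).map (fun p => p.1 + p.2)

/-- n-fold convolution power of a measure on `ℝ`. -/
noncomputable def convPow (μ : Measure ℝ) : ℕ → Measure ℝ
  | 0 => Measure.dirac 0
  | n + 1 => mconv μ (convPow μ n)

/-- Characteristic function of a measure on `ℝ`. -/
noncomputable def cf (μ : Measure ℝ) (t : ℝ) : ℂ :=
  ∫ x, Complex.exp (t * x * Complex.I) ∂μ

/-- A probability measure `μ` on `ℝ` is infinitely divisible if every `n ≥ 1`
admits a probability measure whose `n`-fold convolution power is `μ`. -/
def InfDivisible (μ : Measure ℝ) : Prop :=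
  ∀ n : ℕ, 1 ≤ n → ∃ ρ : Measure ℝ, IsProbabilityMeasure ρ ∧ convPow ρ n = μ

/-- `μ` is compound Poisson with (finite) Lévy measure `m`. -/
def IsCompoundPoisson (μ m : Measure ℝ) : Prop :=
  IsProbabilityMeasure μ ∧
    ∀ t : ℝ, cf μ t = Complex.exp (∫ x, (Complex.exp (t * x * Complex.I) - 1) ∂m)

/-!
Write `P(w) = 2w + 2w² − w³ + 2w⁴ + 2w⁵`, so that the prescribed characteristic function is
`exp (P(e^{it}) − 7)`. Expanding `exp ∘ P = ∑ₘ cₘ wᵐ` with `cₘ = ∑ₖ (Pᵏ)ₘ / k!`, every `Pᵏ` with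
`k ≥ 4` has nonnegative coefficients (it is a product of copies of `P²` and `P⁵`), and so does
`1 + P + P²/2 + P³/6`; hence `Z` can be taken with `ℙ(Z = m) = e⁻⁷ cₘ`.

If `Z` had a fifth convolution root `ρ`, then `φ_ρ⁵ = exp (P(e^{it}) − 7)` and continuity force
`φ_ρ = exp ((P(e^{it}) − 7) / 5) = ∑ₘ dₘ e^{imt}` with `d₃ = −(11/375) e^{−7/5} < 0`. This is
impossible: the coefficients of an absolutely convergent expansion of a characteristic function in
`e^{imt}` are nonnegative, by positive definiteness.

The last claim is the identity `ν + δ₃ = 2δ₁ + 2δ₂ + 2δ₄ + 2δ₅` of Lévy measures.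
-/

open Polynomial
open scoped Nat

namespace Polynomial

theorem hasSum_coeff_smul_pow {R A : Type*} [CommSemiring R] [Semiring A] [Algebra R A]
    [TopologicalSpace A] (p : R[X]) (x : A) :
    HasSum (fun n => p.coeff n • x ^ n) (aeval x p) := by
  rw [aeval_eq_sum_range]
  exact hasSum_sum_of_ne_finset_zero fun n hn => by
    rw [coeff_eq_zero_of_natDegree_lt (by simpa using hn), zero_smul]

noncomputable def absCoeffs (p : ℝ[X]) : ℝ[X] := ∑ n ∈ p.support, C |p.coeff n| * X ^ n

@[simp]
theorem coeff_absCoeffs (p : ℝ[X]) (n : ℕ) : (absCoeffs p).coeff n = |p.coeff n| := by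
  simp +contextual [absCoeffs]

theorem abs_coeff_pow_le (p : ℝ[X]) (k m : ℕ) :
    |(p ^ k).coeff m| ≤ (absCoeffs p ^ k).coeff m := by
  induction k generalizing m with
  | zero => by_cases hm : m = 0 <;> simp [coeff_one, hm]
  | succ k ih =>
    simp only [pow_succ, coeff_mul]
    refine (Finset.abs_sum_le_sum_abs _ _).trans (Finset.sum_le_sum fun ij _ => ?_)
    rw [abs_mul, coeff_absCoeffs]
    exact mul_le_mul_of_nonneg_right (ih ij.1) (abs_nonneg _)

noncomputable def expCoeff (p : ℝ[X]) (m : ℕ) : ℝ := ∑' k, (p ^ k).coeff m / k !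

theorem summable_expCoeff_majorant (p : ℝ[X]) {r : ℝ} (hr : 0 ≤ r) :
    Summable fun km : ℕ × ℕ => (absCoeffs p ^ km.1).coeff km.2 * r ^ km.2 / km.1 ! := by
  have hnonneg : ∀ k m, 0 ≤ (absCoeffs p ^ k).coeff m :=
    fun k m => (abs_nonneg _).trans (abs_coeff_pow_le p k m)
  have hfiber (k : ℕ) : HasSum (fun m => (absCoeffs p ^ k).coeff m * r ^ m / k !)
      (eval r (absCoeffs p) ^ k / k !) := by
    simpa [← eval_pow, div_eq_mul_inv, mul_right_comm] using
      (hasSum_coeff_smul_pow (absCoeffs p ^ k) r).div_const (k ! : ℝ)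
  refine (summable_prod_of_nonneg fun km => by have := hnonneg km.1 km.2; positivity).2
    ⟨fun k => (hfiber k).summable, ?_⟩
  simpa only [(hfiber _).tsum_eq] using Real.summable_pow_div_factorial _

theorem norm_expCoeff_term_le (p : ℝ[X]) (k m : ℕ) :
    ‖(p ^ k).coeff m / (k ! : ℝ)‖ ≤ (absCoeffs p ^ k).coeff m * 1 ^ m / k ! := by
  rw [one_pow, mul_one, norm_div, Real.norm_eq_abs, Real.norm_natCast]
  gcongr
  exact abs_coeff_pow_le p k m

theorem summable_expCoeff_terms (p : ℝ[X]) (m : ℕ) : Summable fun k => (p ^ k).coeff m / k ! :=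
  ((summable_expCoeff_majorant p zero_le_one).prod_symm.prod_factor m).of_norm_bounded
    fun k => norm_expCoeff_term_le p k m

theorem summable_abs_expCoeff (p : ℝ[X]) : Summable fun m => |p.expCoeff m| := by
  have hmaj := (summable_expCoeff_majorant p zero_le_one).prod_symm
  exact hmaj.prod.of_nonneg_of_le (fun _ => abs_nonneg _) fun m =>
    tsum_of_norm_bounded (hmaj.prod_factor m).hasSum fun k => norm_expCoeff_term_le p k m

theorem expCoeff_eq_sum_range_of_coeff_zero {p : ℝ[X]} (hp : p.coeff 0 = 0) (m : ℕ) :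
    p.expCoeff m = ∑ k ∈ Finset.range (m + 1), (p ^ k).coeff m / k ! := by
  refine tsum_eq_sum fun k hk => ?_
  obtain ⟨q, rfl⟩ : X ∣ p := X_dvd_iff.2 hp
  rw [mul_pow, coeff_X_pow_mul', if_neg (by simpa using hk), zero_div]

theorem hasSum_expCoeff_mul_pow (p : ℝ[X]) (w : ℂ) :
    HasSum (fun m => (p.expCoeff m : ℂ) * w ^ m) (cexp (aeval w p)) := by
  set F : ℕ × ℕ → ℂ := fun km => ((p ^ km.1).coeff km.2 / km.1 ! : ℝ) * w ^ km.2
  have hF : Summable F := by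
    refine (summable_expCoeff_majorant p (norm_nonneg w)).of_norm_bounded fun km => ?_
    simp only [F, norm_mul, norm_pow, Complex.norm_real, norm_div, Real.norm_eq_abs,
      Nat.abs_cast, div_mul_eq_mul_div]
    gcongr
    exact abs_coeff_pow_le p _ _
  have hfiber (k : ℕ) : HasSum (fun m => F (k, m)) (aeval w p ^ k / k !) := by
    simpa [F, ← map_pow, Complex.real_smul, div_eq_mul_inv, mul_right_comm] using
      (hasSum_coeff_smul_pow (p ^ k) w).div_const (k ! : ℂ)
  have htotal : HasSum F (cexp (aeval w p)) := by
    convert hF.hasSum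
    rw [Complex.exp_eq_exp_ℂ]
    exact (NormedSpace.expSeries_div_hasSum_exp _).unique (hF.hasSum.prod_fiberwise hfiber)
  have hswap : HasSum (fun mk : ℕ × ℕ => F (mk.2, mk.1)) (cexp (aeval w p)) :=
    (Equiv.prodComm ℕ ℕ).hasSum_iff.2 htotal
  refine hswap.prod_fiberwise fun m => ?_
  rw [show (p.expCoeff m : ℂ) * w ^ m = ∑' k, F (k, m) by
    simp only [F, expCoeff, Complex.ofReal_tsum, tsum_mul_right]]
  exact (hswap.summable.prod_factor m).hasSum

theorem hasSum_expCoeff_mul_pow_real (p : ℝ[X]) (x : ℝ) :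
    HasSum (fun m => p.expCoeff m * x ^ m) (Real.exp (p.eval x)) := by
  have h := hasSum_expCoeff_mul_pow p (algebraMap ℝ ℂ x)
  rw [aeval_algebraMap_apply_eq_algebraMap_eval, Complex.coe_algebraMap] at h
  exact_mod_cast h

noncomputable abbrev natPolynomials : Subsemiring ℝ[X] := (mapRingHom (Nat.castRingHom ℝ)).rangeS

theorem coeff_nonneg_of_mem_natPolynomials {p : ℝ[X]} (hp : p ∈ natPolynomials) (n : ℕ) :
    0 ≤ p.coeff n := by
  obtain ⟨q, rfl⟩ := hp
  simp

end Polynomial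

theorem eq_exp_div_of_pow_eq_exp {X : Type*} [TopologicalSpace X] [PreconnectedSpace X]
    {f g : X → ℂ} (hf : Continuous f) (hg : Continuous g) {n : ℕ} (hn : n ≠ 0)
    (hpow : ∀ x, f x ^ n = cexp (g x)) {x₀ : X} (hx₀ : f x₀ = cexp (g x₀ / n)) (x : X) :
    f x = cexp (g x / n) := by
  set h : X → ℂ := fun x => f x * cexp (-(g x / n))
  have hroot (y : X) : h y ∈ {z : ℂ | z ^ n = 1} := by
    simp only [h, Set.mem_ofPred_eq, mul_pow, hpow, ← Complex.exp_nat_mul, ← Complex.exp_add]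
    field_simp
    simp
  have hfinite : {z : ℂ | z ^ n = 1}.Finite := by
    refine (nthRootsFinset n (1 : ℂ)).finite_toSet.subset fun z hz => ?_
    exact (mem_nthRootsFinset (Nat.pos_of_ne_zero hn) 1).2 hz
  have hconst : h x = h x₀ :=
    isPreconnected_univ.constant_of_mapsTo hfinite.isDiscrete (by fun_prop)
      (fun y _ => hroot y) trivial trivial
  rw [← mul_inv_eq_one₀ (Complex.exp_ne_zero _), ← Complex.exp_neg]
  simpa [h, hx₀, ← Complex.exp_add] using hconst

theorem cf_eq_charFun (μ : Measure ℝ) : cf μ = charFun μ :=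
  funext fun t => (charFun_apply_real t).symm

theorem mconv_eq_conv (μ ν : Measure ℝ) : mconv μ ν = μ ∗ ν := rfl

instance isFiniteMeasure_convPow (ρ : Measure ℝ) [IsFiniteMeasure ρ] (n : ℕ) :
    IsFiniteMeasure (convPow ρ n) := by
  induction n with
  | zero => rw [convPow]; infer_instance
  | succ n ih => rw [convPow, mconv_eq_conv]; infer_instance

theorem charFun_convPow (ρ : Measure ℝ) [IsFiniteMeasure ρ] (n : ℕ) (t : ℝ) :
    charFun (convPow ρ n) t = charFun ρ t ^ n := by
  induction n with
  | zero => simp [convPow, charFun_dirac]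
  | succ n ih => rw [convPow, mconv_eq_conv, charFun_conv, ih, pow_succ']

theorem charFun_sum_smul_dirac_natCast {a : ℕ → ℝ} (ha : ∀ n, 0 ≤ a n) (t : ℝ) :
    charFun (Measure.sum fun n : ℕ => ENNReal.ofReal (a n) • Measure.dirac (n : ℝ)) t =
      ∑' n, a n * cexp (t * I) ^ n := by
  rw [charFun_apply_real, integral_sum_dirac fun _ => ENNReal.ofReal_ne_top]
  congr with n
  rw [ENNReal.toReal_ofReal (ha n), real_smul, ← Complex.exp_nat_mul]
  push_cast
  ring_nf

theorem sum_smul_dirac_natCast_compl_range (c : ℕ → ENNReal) :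
    (Measure.sum fun n : ℕ => c n • Measure.dirac (n : ℝ)) (Set.range ((↑·) : ℕ → ℝ))ᶜ = 0 := by
  have hmeas : MeasurableSet (Set.range ((↑·) : ℕ → ℝ))ᶜ :=
    (Set.countable_range _).measurableSet.compl
  simp [Measure.sum_apply _ hmeas, Measure.dirac_apply' _ hmeas]

open Real in
noncomputable def periodMeasure : Measure ℝ := volume.restrict (Set.Ioc 0 (2 * π))

instance : IsFiniteMeasure periodMeasure := by
  rw [periodMeasure]
  infer_instance

theorem charFun_periodMeasure_zero : charFun periodMeasure 0 = 2 * Real.pi := by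
  simp [periodMeasure, Real.pi_pos.le]

theorem charFun_periodMeasure_intCast {n : ℤ} (hn : n ≠ 0) : charFun periodMeasure n = 0 := by
  have hc : (n : ℂ) * I ≠ 0 := mul_ne_zero (by exact_mod_cast hn) I_ne_zero
  rw [charFun_apply_real, periodMeasure, ← intervalIntegral.integral_of_le (by positivity)]
  simp_rw [show ∀ x : ℝ, ((n : ℝ) : ℂ) * x * I = (n * I) * x from fun x => by push_cast; ring]
  rw [integral_exp_mul_complex hc,
    show (n * I : ℂ) * ((2 * Real.pi : ℝ) : ℂ) = n * (2 * Real.pi * I) by push_cast; ring,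
    Complex.exp_int_mul_two_pi_mul_I]
  simp

noncomputable def periodDiffMeasure : Measure ℝ := periodMeasure ∗ periodMeasure.map (-1 * ·)

instance : IsFiniteMeasure periodDiffMeasure := by
  rw [periodDiffMeasure]
  infer_instance

theorem charFun_periodDiffMeasure (t : ℝ) :
    charFun periodDiffMeasure t = (normSq (charFun periodMeasure t) : ℂ) := by
  rw [periodDiffMeasure, charFun_conv, charFun_map_mul, neg_one_mul, charFun_neg, mul_conj]

theorem integral_cexp_mul_charFun (σ ρ : Measure ℝ) [IsFiniteMeasure σ] [IsFiniteMeasure ρ]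
    (a : ℝ) : ∫ t, cexp (-(a * t) * I) * charFun ρ t ∂σ = ∫ x, charFun σ (x - a) ∂ρ := by
  have hint : Integrable (Function.uncurry fun t x : ℝ => cexp (-(a * t) * I) * cexp (t * x * I))
      (σ.prod ρ) :=
    Integrable.of_bound (by fun_prop) 1 (ae_of_all _ fun ⟨t, x⟩ => by simp [Complex.norm_exp])
  simp_rw [charFun_apply_real, ← integral_const_mul]
  rw [integral_integral_swap hint]
  congr with x
  congr with t
  rw [← Complex.exp_add]
  push_cast
  ring_nf

theorem integral_cexp_mul_tsum (σ : Measure ℝ) [IsFiniteMeasure σ] {d : ℕ → ℝ}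
    (hd : Summable fun m => |d m|) (a : ℝ) :
    ∫ t, cexp (-(a * t) * I) * ∑' m, d m * cexp (t * I) ^ m ∂σ =
      ∑' m, d m * charFun σ (m - a) := by
  have hterm (m : ℕ) (t : ℝ) : cexp (-(a * t) * I) * (d m * cexp (t * I) ^ m) =
      d m * cexp ((m - a) * t * I) := by
    rw [← Complex.exp_nat_mul, mul_left_comm, ← Complex.exp_add]
    ring_nf
  have hnorm (m : ℕ) : ∫ t, ‖(d m : ℂ) * cexp ((m - a) * t * I)‖ ∂σ = |d m| * σ.real Set.univ := by
    simp [Complex.norm_exp, mul_comm]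
  simp_rw [← tsum_mul_left, hterm]
  rw [← integral_tsum_of_summable_integral_norm (fun m => Integrable.of_bound (by fun_prop) |d m|
    (ae_of_all _ fun t => by simp [Complex.norm_exp])) (by simpa only [hnorm] using hd.mul_right _)]
  simp_rw [integral_const_mul, charFun_apply_real]
  push_cast
  rfl

/-- Integrate `e^{-ijt} charFun ρ t` against `periodDiffMeasure`: by orthogonality the series
gives `(2π)² d j`, while Fubini gives `∫ |charFun periodMeasure (x - j)|² dρ(x) ≥ 0`. -/
theorem nonneg_of_charFun_eq_tsum {ρ : Measure ℝ} [IsFiniteMeasure ρ] {d : ℕ → ℝ}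
    (hd : Summable fun m => |d m|) (h : ∀ t, charFun ρ t = ∑' m, d m * cexp (t * I) ^ m)
    (j : ℕ) : 0 ≤ d j := by
  have key := integral_cexp_mul_charFun periodDiffMeasure ρ j
  simp_rw [h] at key
  rw [integral_cexp_mul_tsum _ hd, tsum_eq_single j fun m hm => ?_] at key
  · simp_rw [charFun_periodDiffMeasure, integral_complex_ofReal, sub_self,
      charFun_periodMeasure_zero] at key
    have hreal : d j * normSq ((2 * Real.pi : ℝ) : ℂ) =
        ∫ x, normSq (charFun periodMeasure (x - j)) ∂ρ := by
      exact_mod_cast key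
    rw [normSq_ofReal] at hreal
    have hpos : 0 < 2 * Real.pi * (2 * Real.pi) := by positivity
    nlinarith [integral_nonneg (μ := ρ) (f := fun x => normSq (charFun periodMeasure (x - j)))
      fun x => normSq_nonneg _]
  · rw [charFun_periodDiffMeasure, show (m : ℝ) - j = ((m - j : ℤ) : ℝ) by push_cast; ring,
      charFun_periodMeasure_intCast (sub_ne_zero.2 (by exact_mod_cast hm))]
    simp

noncomputable def rosinskiPoly : ℝ[X] := 2 * X + 2 * X ^ 2 - X ^ 3 + 2 * X ^ 4 + 2 * X ^ 5

theorem rosinskiPoly_sq_mem : rosinskiPoly ^ 2 ∈ natPolynomials :=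
  ⟨4 * X ^ 2 + 8 * X ^ 3 + 4 * X ^ 5 + 17 * X ^ 6 + 4 * X ^ 7 + 8 * X ^ 9 + 4 * X ^ 10, by
    simp [rosinskiPoly]; ring⟩

theorem rosinskiPoly_pow_five_mem : rosinskiPoly ^ 5 ∈ natPolynomials :=
  ⟨32 * X ^ 5 + 160 * X ^ 6 + 240 * X ^ 7 + 160 * X ^ 8 + 560 * X ^ 9 + 1232 * X ^ 10
    + 760 * X ^ 11 + 720 * X ^ 12 + 2290 * X ^ 13 + 1930 * X ^ 14 + 639 * X ^ 15
    + 1930 * X ^ 16 + 2290 * X ^ 17 + 720 * X ^ 18 + 760 * X ^ 19 + 1232 * X ^ 20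
    + 560 * X ^ 21 + 160 * X ^ 22 + 240 * X ^ 23 + 160 * X ^ 24 + 32 * X ^ 25, by
    simp [rosinskiPoly]; ring⟩

/-- Six times the cubic Taylor truncation of `exp ∘ rosinskiPoly`; the `−X³` of `rosinskiPoly`
and the `−X⁹` of `rosinskiPoly ^ 3` are absorbed by `rosinskiPoly ^ 2`. -/
theorem exp_truncation_mem :
    C 6 + C 6 * rosinskiPoly + C 3 * rosinskiPoly ^ 2 + rosinskiPoly ^ 3 ∈ natPolynomials :=
  ⟨6 + 12 * X + 24 * X ^ 2 + 26 * X ^ 3 + 36 * X ^ 4 + 36 * X ^ 5 + 59 * X ^ 6 + 78 * X ^ 7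
    + 54 * X ^ 8 + 23 * X ^ 9 + 66 * X ^ 10 + 66 * X ^ 11 + 8 * X ^ 12 + 12 * X ^ 13
    + 24 * X ^ 14 + 8 * X ^ 15, by
    simp [rosinskiPoly, map_ofNat C]; ring⟩

theorem rosinskiPoly_pow_mem {k : ℕ} (hk : 4 ≤ k) : rosinskiPoly ^ k ∈ natPolynomials := by
  obtain ⟨j, rfl | rfl⟩ : ∃ j, k = 2 * (j + 2) ∨ k = 2 * j + 5 := by
    rcases Nat.even_or_odd k with ⟨j, hj⟩ | ⟨j, hj⟩ <;> exact ⟨j - 2, by omega⟩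
  · rw [pow_mul]
    exact pow_mem rosinskiPoly_sq_mem _
  · rw [pow_add, pow_mul]
    exact mul_mem (pow_mem rosinskiPoly_sq_mem _) rosinskiPoly_pow_five_mem

theorem expCoeff_rosinskiPoly_nonneg (m : ℕ) : 0 ≤ rosinskiPoly.expCoeff m := by
  rw [expCoeff, ← (summable_expCoeff_terms _ m).sum_add_tsum_nat_add 4]
  have hhead : ∑ k ∈ Finset.range 4, (rosinskiPoly ^ k).coeff m / k ! =
      (C 6 + C 6 * rosinskiPoly + C 3 * rosinskiPoly ^ 2 + rosinskiPoly ^ 3).coeff m / 6 := by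
    simp [Finset.sum_range_succ, Nat.factorial, coeff_one, coeff_C]
    split_ifs <;> ring
  rw [hhead]
  exact add_nonneg
    (div_nonneg (coeff_nonneg_of_mem_natPolynomials exp_truncation_mem m) (by norm_num))
    (tsum_nonneg fun k => div_nonneg
      (coeff_nonneg_of_mem_natPolynomials (rosinskiPoly_pow_mem (by omega)) m) (by positivity))

theorem expCoeff_fifth_rosinskiPoly_three :
    (C (1 / 5) * rosinskiPoly).expCoeff 3 = -11 / 375 := by
  rw [expCoeff_eq_sum_range_of_coeff_zero (by simp [rosinskiPoly])]
  simp [Finset.sum_range_succ, mul_pow, ← C_pow, rosinskiPoly, pow_succ, coeff_mul,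
    Finset.Nat.sum_antidiagonal_succ, coeff_X, coeff_one]
  norm_num

noncomputable def rosinskiExponent (t : ℝ) : ℂ :=
  2 * (Complex.exp (t * 1 * Complex.I) - 1)
    + 2 * (Complex.exp (t * 2 * Complex.I) - 1)
    - (Complex.exp (t * 3 * Complex.I) - 1)
    + 2 * (Complex.exp (t * 4 * Complex.I) - 1)
    + 2 * (Complex.exp (t * 5 * Complex.I) - 1)

theorem rosinskiExponent_eq (t : ℝ) :
    rosinskiExponent t = aeval (cexp (t * I)) rosinskiPoly - 7 := by
  simp only [rosinskiExponent, rosinskiPoly, map_add, map_sub, map_mul, map_pow, aeval_X,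
    map_ofNat, ← Complex.exp_nat_mul]
  ring_nf

noncomputable def rosinskiWeight (n : ℕ) : ℝ := Real.exp (-7) * rosinskiPoly.expCoeff n

theorem rosinskiWeight_nonneg (n : ℕ) : 0 ≤ rosinskiWeight n :=
  mul_nonneg (Real.exp_nonneg _) (expCoeff_rosinskiPoly_nonneg n)

noncomputable def rosinskiMeasure : Measure ℝ :=
  Measure.sum fun n : ℕ => ENNReal.ofReal (rosinskiWeight n) • Measure.dirac (n : ℝ)

theorem hasSum_rosinskiWeight : HasSum rosinskiWeight 1 := by
  unfold rosinskiWeight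
  have h := (rosinskiPoly.hasSum_expCoeff_mul_pow_real 1).mul_left (Real.exp (-7))
  rw [show rosinskiPoly.eval 1 = 7 by norm_num [rosinskiPoly], ← Real.exp_add, neg_add_cancel,
    Real.exp_zero] at h
  simpa only [one_pow, mul_one] using h

instance : IsProbabilityMeasure rosinskiMeasure :=
  hasSum_rosinskiWeight.isProbabilityMeasure_sum_dirac rosinskiWeight_nonneg

theorem charFun_rosinskiMeasure (t : ℝ) :
    charFun rosinskiMeasure t = cexp (rosinskiExponent t) := by
  rw [rosinskiMeasure, charFun_sum_smul_dirac_natCast rosinskiWeight_nonneg, rosinskiExponent_eq,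
    sub_eq_neg_add, Complex.exp_add, ← ((hasSum_expCoeff_mul_pow _ _).mul_left (cexp (-7))).tsum_eq]
  simp only [rosinskiWeight]
  push_cast
  simp_rw [mul_assoc]

theorem not_infDivisible_rosinskiMeasure : ¬ InfDivisible rosinskiMeasure := by
  intro hdiv
  obtain ⟨ρ, hρ, hρ5⟩ := hdiv 5 (by norm_num)
  have hroot (t : ℝ) : charFun ρ t = cexp (rosinskiExponent t / (5 : ℕ)) := by
    refine eq_exp_div_of_pow_eq_exp continuous_charFun (by unfold rosinskiExponent; fun_prop)
      (by norm_num) (fun t => ?_) (x₀ := 0) (by simp [rosinskiExponent]) t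
    rw [← charFun_convPow, hρ5, charFun_rosinskiMeasure]
  set d : ℕ → ℝ := fun m => Real.exp (-7 / 5) * (C (1 / 5) * rosinskiPoly).expCoeff m
  have hseries (t : ℝ) : charFun ρ t = ∑' m, d m * cexp (t * I) ^ m := by
    have hexp : cexp (rosinskiExponent t / (5 : ℕ)) =
        cexp (-7 / 5) * cexp (aeval (cexp (t * I)) (C (1 / 5) * rosinskiPoly)) := by
      rw [rosinskiExponent_eq, ← Complex.exp_add]
      simp only [map_mul, aeval_C, Complex.coe_algebraMap]
      push_cast
      ring_nf
    rw [hroot, hexp, ← ((hasSum_expCoeff_mul_pow _ _).mul_left _).tsum_eq]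
    congr with m
    simp [d, mul_assoc]
  have hd3 : d 3 < 0 := by
    simp only [d, expCoeff_fifth_rosinskiPoly_three]
    exact mul_neg_of_pos_of_neg (Real.exp_pos _) (by norm_num)
  have hd : Summable fun m => |d m| :=
    ((summable_abs_expCoeff (C (1 / 5) * rosinskiPoly)).mul_left (Real.exp (-7 / 5))).congr
      fun m => by simp [d, abs_mul, abs_of_pos (Real.exp_pos _)]
  exact hd3.not_ge (nonneg_of_charFun_eq_tsum hd hseries 3)

theorem isCompoundPoisson_mconv_rosinskiMeasure {μX : Measure ℝ}
    (hX : IsCompoundPoisson μX (Measure.dirac 3)) :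
    IsCompoundPoisson (mconv rosinskiMeasure μX)
      ((2 : ℝ≥0∞) • Measure.dirac 1 + (2 : ℝ≥0∞) • Measure.dirac 2
        + (2 : ℝ≥0∞) • Measure.dirac 4 + (2 : ℝ≥0∞) • Measure.dirac 5) := by
  obtain ⟨hprob, hcf⟩ := hX
  refine ⟨by rw [mconv_eq_conv]; infer_instance, fun t => ?_⟩
  rw [cf_eq_charFun, mconv_eq_conv, charFun_conv, charFun_rosinskiMeasure, ← cf_eq_charFun, hcf,
    ← Complex.exp_add]
  have hint (μ : Measure ℝ) [IsFiniteMeasure μ] :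
      Integrable (fun x : ℝ => cexp (t * x * I) - 1) μ :=
    Integrable.of_bound (by fun_prop) 2 (ae_of_all _ fun x =>
      (norm_sub_le _ _).trans (by simp [Complex.norm_exp]; norm_num))
  have (a : ℝ) : IsFiniteMeasure ((2 : ℝ≥0∞) • Measure.dirac a) :=
    (Measure.dirac a).smul_finite (by norm_num)
  rw [integral_add_measure (hint _) (hint _), integral_add_measure (hint _) (hint _),
    integral_add_measure (hint _) (hint _)]
  simp [integral_smul_measure, integral_dirac, rosinskiExponent]
  congr 1
  ring

/-- Rosiński's example: there is a non-negative integer-valued random variable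
`Z` with characteristic function `exp(∫(e^{itx}−1)dν)`,
`ν = 2δ₁ + 2δ₂ − δ₃ + 2δ₄ + 2δ₅`, which is not infinitely divisible, yet the
sum of `Z` with an independent compound Poisson variable with Lévy measure `δ₃`
is compound Poisson with Lévy measure `2δ₁ + 2δ₂ + 2δ₄ + 2δ₅`. -/
theorem rosinski_counterexample :
    ∃ μZ : Measure ℝ, IsProbabilityMeasure μZ
      ∧ μZ (Set.range ((↑·) : ℕ → ℝ))ᶜ = 0
      ∧ (∀ t : ℝ, cf μZ t = Complex.exp
          (2 * (Complex.exp (t * 1 * Complex.I) - 1)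
            + 2 * (Complex.exp (t * 2 * Complex.I) - 1)
            - (Complex.exp (t * 3 * Complex.I) - 1)
            + 2 * (Complex.exp (t * 4 * Complex.I) - 1)
            + 2 * (Complex.exp (t * 5 * Complex.I) - 1)))
      ∧ ¬ InfDivisible μZ
      ∧ ∀ μX : Measure ℝ, IsCompoundPoisson μX (Measure.dirac 3) →
          IsCompoundPoisson (mconv μZ μX)
            ((2 : ℝ≥0∞) • Measure.dirac 1 + (2 : ℝ≥0∞) • Measure.dirac 2
              + (2 : ℝ≥0∞) • Measure.dirac 4 + (2 : ℝ≥0∞) • Measure.dirac 5) := by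
  refine ⟨rosinskiMeasure, inferInstance, sum_smul_dirac_natCast_compl_range _, fun t => ?_,
    not_infDivisible_rosinskiMeasure, fun _ hX => isCompoundPoisson_mconv_rosinskiMeasure hX⟩
  rw [cf_eq_charFun, charFun_rosinskiMeasure, rosinskiExponent]
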